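/- Let L be a lattice with a ℤ-action as above and X the quotient graph on L/ℤ. Then X satisfies the triangle condition: for every n ≥ 2 and vertices x, y, z ∈ X with d(x,y) = d(x,z) = n and d(y,z) = 1, there exists a vertex u ∈ X with d(u,y) = d(u,z) = 1 and d(x,u) = n - 1. -/

import Mathlib

open SimpleGraph

/-- The orbit relation of the `ℤ`-action on `L` generated by the order
automorphism `T` (the action of `n` is `T ^ n`, written `x + n` in the paper). -/
def zOrbitRel {L : Type*} [Lattice L] (T : L ≃o L) (x y : L) : Prop :=
  ∃ k : ℤ, (T ^ k) x = y

/-- The graph `X` on the quotient `L/ℤ`, with an edge between two distinct classes `x, y`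
whenever some representatives satisfy `x₀ ≤ y₀ ≤ x₀ + 1`. -/
def quotGraph {L : Type*} [Lattice L] (T : L ≃o L) : SimpleGraph (Quot (zOrbitRel T)) where
  Adj x y := x ≠ y ∧ ∃ x₀ y₀ : L, Quot.mk _ x₀ = x ∧ Quot.mk _ y₀ = y ∧
    x₀ ≤ y₀ ∧ y₀ ≤ T x₀
  symm := ⟨by
    rintro x y ⟨hne, x₀, y₀, hx, hy, h1, h2⟩
    refine ⟨hne.symm, y₀, T x₀, hy, ?_, h2, T.monotone h1⟩
    rw [← hx]
    exact (Quot.sound ⟨(1 : ℤ), by simp⟩).symm⟩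
  loopless := ⟨by rintro x ⟨hne, -⟩; exact hne rfl⟩

/-
Fix a representative `x₀` of `x` and write `a + k` for `Tᵏ a`. A walk of length `m` out of the
class of `x₀` lifts to a chain of representatives, so the distance from `x` to a class `w` is the
least `m` with a representative of `w` in `[x₀, x₀ + m]`; conversely `w₀ ∈ [x₀, x₀ + m]` is
reached through the points `w₀ ⊓ (x₀ + i)`. Hence `y` and `z` have representatives `y₀, z₀` in
`[x₀, x₀ + n]`, and the minimality of `n` forces the edge `yz` to be realised by these very
representatives: `y₀ ≤ z₀ ≤ y₀ + 1` up to swapping `y` and `z`. Then `u₀ = x₀ ⊔ (z₀ - 1)` lies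
in `[x₀, x₀ + (n - 1)]` and `u₀ ≤ y₀ ≤ z₀ ≤ u₀ + 1`, so its class is the required vertex.
-/

theorem SimpleGraph.dist_eq_of_walk_length_le {V : Type*} {G : SimpleGraph V} {x u y : V}
    {n : ℕ} (hxy : G.dist x y = n + 1) (p : G.Walk x u) (hp : p.length ≤ n)
    (q : G.Walk u y) (hq : q.length ≤ 1) : G.dist x u = n ∧ G.dist u y = 1 := by
  have hxu := (dist_le p).trans hp
  have huy := (dist_le q).trans hq
  have := Reachable.dist_triangle_left ⟨p⟩ y
  omega

namespace OrderIso

section Preorder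

variable {α : Type*} [Preorder α] {T : α ≃o α}

theorem strictMono_zpow_apply (hinc : ∀ x : α, x < T x) (x : α) :
    StrictMono fun k : ℤ => (T ^ k) x :=
  strictMono_int_of_lt_succ fun k => by rw [zpow_add_one]; exact (T ^ k).strictMono (hinc x)

theorem le_pow_apply (hinc : ∀ x : α, x < T x) (m : ℕ) (x : α) : x ≤ (T ^ m) x := by
  simpa using (strictMono_zpow_apply hinc x).monotone (Int.natCast_nonneg m)

end Preorder

theorem exists_le_and_le_apply_of_le {L : Type*} [Lattice L] {T : L ≃o L}
    (hinc : ∀ x : L, x < T x) {x₀ y₀ z₀ : L} {m : ℕ}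
    (hxy : x₀ ≤ y₀) (hyz : y₀ ≤ z₀) (hzy : z₀ ≤ T y₀) (hzx : z₀ ≤ (T ^ (m + 1)) x₀) :
    ∃ u₀, (x₀ ≤ u₀ ∧ u₀ ≤ (T ^ m) x₀) ∧ (u₀ ≤ y₀ ∧ y₀ ≤ T u₀) ∧ (u₀ ≤ z₀ ∧ z₀ ≤ T u₀) := by
  have hzu : z₀ ≤ T (x₀ ⊔ T.symm z₀) := T.symm_apply_le.mp le_sup_right
  have huy : x₀ ⊔ T.symm z₀ ≤ y₀ := sup_le hxy (T.symm_apply_le.mpr hzy)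
  have hux : x₀ ⊔ T.symm z₀ ≤ (T ^ m) x₀ :=
    sup_le (le_pow_apply hinc m x₀) (T.symm_apply_le.mpr (by rwa [pow_succ'] at hzx))
  exact ⟨x₀ ⊔ T.symm z₀, ⟨le_sup_left, hux⟩, ⟨huy, hyz.trans hzu⟩, ⟨huy.trans hyz, hzu⟩⟩

end OrderIso

section

variable {L : Type*} [Lattice L] {T : L ≃o L}

namespace zOrbitRel

theorem equivalence (T : L ≃o L) : Equivalence (zOrbitRel T) where
  refl _ := ⟨0, rfl⟩
  symm := by
    rintro x _ ⟨k, rfl⟩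
    exact ⟨-k, by rw [← RelIso.mul_apply, ← zpow_add, neg_add_cancel, zpow_zero]; rfl⟩
  trans := by
    rintro x _ _ ⟨k, rfl⟩ ⟨l, rfl⟩
    exact ⟨l + k, by rw [zpow_add]; rfl⟩

theorem quot_mk_eq_iff {a b : L} :
    Quot.mk (zOrbitRel T) a = Quot.mk (zOrbitRel T) b ↔ zOrbitRel T a b :=
  (equivalence T).quot_mk_eq_iff a b

@[simp]
theorem quot_mk_zpow_apply (k : ℤ) (a : L) :
    Quot.mk (zOrbitRel T) ((T ^ k) a) = Quot.mk (zOrbitRel T) a :=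
  (Quot.sound ⟨k, rfl⟩).symm

@[simp]
theorem quot_mk_apply (a : L) : Quot.mk (zOrbitRel T) (T a) = Quot.mk (zOrbitRel T) a := by
  simpa using quot_mk_zpow_apply (T := T) 1 a

end zOrbitRel

namespace quotGraph

open OrderIso zOrbitRel

theorem exists_rep_le_pow_length {X Y : Quot (zOrbitRel T)} (p : (quotGraph T).Walk X Y)
    {x₀ : L} (hx₀ : Quot.mk _ x₀ = X) :
    ∃ y₀ : L, Quot.mk _ y₀ = Y ∧ x₀ ≤ y₀ ∧ y₀ ≤ (T ^ p.length) x₀ := by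
  induction p generalizing x₀ with
  | nil => exact ⟨x₀, hx₀, le_rfl, le_rfl⟩
  | cons h p ih =>
    obtain ⟨-, a, b, rfl, rfl, hab, hba⟩ := h
    obtain ⟨k, rfl⟩ := quot_mk_eq_iff.mp hx₀.symm
    obtain ⟨y₀, hy₀, h₁, h₂⟩ := ih (quot_mk_zpow_apply k b)
    have hbk : (T ^ k) b ≤ T ((T ^ k) a) := by
      rw [← RelIso.mul_apply, ← zpow_one_add, add_comm, zpow_add_one]
      exact (T ^ k).monotone hba
    exact ⟨y₀, hy₀, ((T ^ k).monotone hab).trans h₁, h₂.trans ((T ^ p.length).monotone hbk)⟩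

theorem exists_rep_le_pow_dist {X Y : Quot (zOrbitRel T)} (h : (quotGraph T).Reachable X Y)
    {x₀ : L} (hx₀ : Quot.mk _ x₀ = X) :
    ∃ y₀ : L, Quot.mk _ y₀ = Y ∧ x₀ ≤ y₀ ∧ y₀ ≤ (T ^ (quotGraph T).dist X Y) x₀ := by
  obtain ⟨p, hp⟩ := h.exists_walk_length_eq_dist
  simpa [hp] using exists_rep_le_pow_length p hx₀

theorem exists_walk_length_le (hinc : ∀ x : L, x < T x) {x₀ y₀ : L} {m : ℕ} (h₁ : x₀ ≤ y₀)
    (h₂ : y₀ ≤ (T ^ m) x₀) :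
    ∃ p : (quotGraph T).Walk (Quot.mk _ x₀) (Quot.mk _ y₀), p.length ≤ m := by
  induction m generalizing y₀ with
  | zero => obtain rfl := le_antisymm h₁ h₂; exact ⟨.nil, le_rfl⟩
  | succ m ih =>
    set v := y₀ ⊓ (T ^ m) x₀
    obtain ⟨p, hp⟩ := ih (le_inf h₁ (le_pow_apply hinc m x₀)) inf_le_right
    have hvy : y₀ ≤ T v := by
      rw [T.map_inf]
      exact le_inf (hinc y₀).le (by rwa [pow_succ'] at h₂)
    by_cases hne : Quot.mk (zOrbitRel T) v = Quot.mk (zOrbitRel T) y₀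
    · exact ⟨p.copy rfl hne, by simp only [Walk.length_copy]; omega⟩
    · have hadj : (quotGraph T).Adj (Quot.mk _ v) (Quot.mk _ y₀) :=
        ⟨hne, v, y₀, rfl, rfl, inf_le_left, hvy⟩
      exact ⟨p.concat hadj, by rw [Walk.length_concat]; omega⟩

theorem dist_le_of_le_pow (hinc : ∀ x : L, x < T x) {x₀ y₀ : L} {m : ℕ} (h₁ : x₀ ≤ y₀)
    (h₂ : y₀ ≤ (T ^ m) x₀) : (quotGraph T).dist (Quot.mk _ x₀) (Quot.mk _ y₀) ≤ m :=
  let ⟨p, hp⟩ := exists_walk_length_le hinc h₁ h₂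
  (dist_le p).trans hp

theorem le_and_le_apply_or_le_and_le_apply (hinc : ∀ x : L, x < T x) {x₀ y₀ z₀ : L} {m : ℕ}
    (hxy : (quotGraph T).dist (Quot.mk _ x₀) (Quot.mk _ y₀) = m + 1)
    (hxz : (quotGraph T).dist (Quot.mk _ x₀) (Quot.mk _ z₀) = m + 1)
    (hyz : (quotGraph T).Adj (Quot.mk _ y₀) (Quot.mk _ z₀))
    (hxy₀ : x₀ ≤ y₀) (hyx₀ : y₀ ≤ (T ^ (m + 1)) x₀)
    (hxz₀ : x₀ ≤ z₀) (hzx₀ : z₀ ≤ (T ^ (m + 1)) x₀) :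
    (y₀ ≤ z₀ ∧ z₀ ≤ T y₀) ∨ (z₀ ≤ y₀ ∧ y₀ ≤ T z₀) := by
  obtain ⟨z₁, hz₁, hyz₁, hzy₁⟩ := exists_rep_le_pow_length (Walk.cons hyz .nil) rfl
  rw [Walk.length_cons, Walk.length_nil, zero_add, pow_one] at hzy₁
  obtain ⟨c, rfl⟩ := quot_mk_eq_iff.mp hz₁.symm
  have horbit := (strictMono_zpow_apply hinc z₀).monotone
  rcases (by omega : c ≤ -1 ∨ c = 0 ∨ c = 1 ∨ 2 ≤ c) with hc | rfl | rfl | hc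
  · -- `z` would have a representative in `[x₀, x₀ + m]`
    have hzm : (T ^ c) z₀ ≤ (T ^ m) x₀ := by
      refine (horbit hc).trans (T.symm_apply_le.mpr ?_)
      rwa [pow_succ'] at hzx₀
    have := dist_le_of_le_pow hinc (hxy₀.trans hyz₁) hzm
    simp only [quot_mk_zpow_apply] at this
    omega
  · exact .inl ⟨hyz₁, hzy₁⟩
  · rw [zpow_one] at hyz₁ hzy₁
    exact .inr ⟨T.le_iff_le.mp hzy₁, hyz₁⟩
  · -- `y` would have a representative in `[x₀ + 1, x₀ + 1 + m]`
    have hzy : T z₀ ≤ y₀ := T.le_iff_le.mp ((horbit hc).trans hzy₁)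
    have := dist_le_of_le_pow (m := m) hinc ((T.monotone hxz₀).trans hzy)
      (by rwa [pow_succ] at hyx₀)
    simp only [quot_mk_apply] at this
    omega

end quotGraph

end

theorem quotGraph_triangle_condition_general {L : Type*} [Lattice L] (T : L ≃o L)
    (hinc : ∀ x : L, x < T x)
    (n : ℕ) (hn : 2 ≤ n) (x y z : Quot (zOrbitRel T))
    (hxy : (quotGraph T).dist x y = n) (hxz : (quotGraph T).dist x z = n)
    (hyz : (quotGraph T).dist y z = 1) :
    ∃ u : Quot (zOrbitRel T), (quotGraph T).dist u y = 1 ∧ (quotGraph T).dist u z = 1 ∧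
      (quotGraph T).dist x u = n - 1 := by
  obtain ⟨m, rfl⟩ : ∃ m, n = m + 1 := ⟨n - 1, by omega⟩
  obtain ⟨x₀, rfl⟩ := Quot.exists_rep x
  obtain ⟨y₀, rfl, hxy₀, hyx₀⟩ :=
    quotGraph.exists_rep_le_pow_dist (Reachable.of_dist_ne_zero (by rw [hxy]; omega)) rfl
  obtain ⟨z₀, rfl, hxz₀, hzx₀⟩ :=
    quotGraph.exists_rep_le_pow_dist (Reachable.of_dist_ne_zero (by rw [hxz]; omega)) rfl
  rw [hxy] at hyx₀
  rw [hxz] at hzx₀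
  obtain ⟨u₀, ⟨hxu, hux⟩, ⟨huy, hyu⟩, ⟨huz, hzu⟩⟩ :
      ∃ u₀, (x₀ ≤ u₀ ∧ u₀ ≤ (T ^ m) x₀) ∧ (u₀ ≤ y₀ ∧ y₀ ≤ T u₀) ∧ (u₀ ≤ z₀ ∧ z₀ ≤ T u₀) := by
    rcases quotGraph.le_and_le_apply_or_le_and_le_apply hinc hxy hxz
      (dist_eq_one_iff_adj.mp hyz) hxy₀ hyx₀ hxz₀ hzx₀ with ⟨hyz₀, hzy₀⟩ | ⟨hzy₀, hyz₀⟩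
    · exact OrderIso.exists_le_and_le_apply_of_le hinc hxy₀ hyz₀ hzy₀ hzx₀
    · obtain ⟨u₀, hx, hz, hy⟩ := OrderIso.exists_le_and_le_apply_of_le hinc hxz₀ hzy₀ hyz₀ hyx₀
      exact ⟨u₀, hx, hy, hz⟩
  obtain ⟨p, hp⟩ := quotGraph.exists_walk_length_le hinc hxu hux
  obtain ⟨q, hq⟩ := quotGraph.exists_walk_length_le (m := 1) hinc huy (by rwa [pow_one])
  obtain ⟨r, hr⟩ := quotGraph.exists_walk_length_le (m := 1) hinc huz (by rwa [pow_one])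
  obtain ⟨hxu', huy'⟩ := dist_eq_of_walk_length_le hxy p hp q hq
  exact ⟨_, huy', (dist_eq_of_walk_length_le hxz p hp r hr).2, by rw [hxu', Nat.add_sub_cancel]⟩

/-- Lemma 2.3. The quotient graph `X = L/ℤ` satisfies the triangle
condition: for every `n ≥ 2` and vertices `x, y, z` with `d(x,y) = d(x,z) = n` and
`d(y,z) = 1`, there is a vertex `u` with `d(u,y) = d(u,z) = 1` and `d(x,u) = n - 1`. -/
theorem quotGraph_triangle_condition {L : Type*} [Lattice L] (T : L ≃o L)
    (hjoin : ∀ S : Set L, S.Nonempty → BddAbove S → ∃ j, IsLUB S j)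
    (hinc : ∀ x : L, x < T x)
    (hcof : ∀ x y : L, ∃ k : ℕ, (T ^ (k : ℤ))⁻¹ x ≤ y ∧ y ≤ (T ^ (k : ℤ)) x)
    (n : ℕ) (hn : 2 ≤ n) (x y z : Quot (zOrbitRel T))
    (hxy : (quotGraph T).dist x y = n) (hxz : (quotGraph T).dist x z = n)
    (hyz : (quotGraph T).dist y z = 1) :
    ∃ u : Quot (zOrbitRel T), (quotGraph T).dist u y = 1 ∧ (quotGraph T).dist u z = 1 ∧
      (quotGraph T).dist x u = n - 1 :=
  quotGraph_triangle_condition_general T hinc n hn x y z hxy hxz hyz
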